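/- Define g₁(t) = (6 − 24t² + 16t⁴)/(1−t²)^{3/2} for t ∈ [0, 1) and g₂(t) = 256·t⁵·(27 − 192t² + 510t⁴ − 672t⁶ + 392t⁸)/(3 − 16t² + 28t⁴)³ for t ∈ [0, 1]. Then g₁(1/√2) = g₂(1/√2) = −4√2; moreover g₁'(t) = −2t(15 − 20t² + 8t⁴)/(1−t²)^{5/2}, g₁'(1/√2) = −56, g₂'(1/√2) = 184, and hence g₂'(1/√2) − g₁'(1/√2) = 240. -/

import Mathlib

open Set

/-- The first piece `g₁(t) = (6 − 24t² + 16t⁴)/(1−t²)^{3/2}` of the inverse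
spherical Radon transform of `1/ρ_{IC}` for the six-dimensional cylinder. -/
noncomputable def gOne (t : ℝ) : ℝ :=
  (6 - 24 * t ^ 2 + 16 * t ^ 4) / (1 - t ^ 2) ^ ((3 : ℝ) / 2)

/-- The second piece
`g₂(t) = 256t⁵(27 − 192t² + 510t⁴ − 672t⁶ + 392t⁸)/(3 − 16t² + 28t⁴)³`. -/
noncomputable def gTwo (t : ℝ) : ℝ :=
  256 * t ^ 5 * (27 - 192 * t ^ 2 + 510 * t ^ 4 - 672 * t ^ 6 + 392 * t ^ 8) /
    (3 - 16 * t ^ 2 + 28 * t ^ 4) ^ 3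


lemma hasDerivAt_gOne {t : ℝ} (h : t ^ 2 < 1) :
    HasDerivAt gOne
      (-(2 * t * (15 - 20 * t ^ 2 + 8 * t ^ 4)) / (1 - t ^ 2) ^ ((5 : ℝ) / 2)) t := by
  have hu : (0:ℝ) < 1 - t ^ 2 := by linarith
  have hnum : HasDerivAt (fun t : ℝ => 6 - 24 * t ^ 2 + 16 * t ^ 4)
      (-48 * t + 64 * t ^ 3) t := by
    have h2 := hasDerivAt_pow 2 t
    have h4 := hasDerivAt_pow 4 t
    exact (((h2.const_mul 24).const_sub 6).add (h4.const_mul 16)).congr_deriv (by push_cast; ring)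
  have hinner : HasDerivAt (fun t : ℝ => 1 - t ^ 2) (-(2 * t)) t := by
    have h2 := hasDerivAt_pow 2 t
    exact (h2.const_sub 1).congr_deriv (by push_cast; ring)
  have hden : HasDerivAt (fun t : ℝ => (1 - t ^ 2) ^ ((3:ℝ)/2))
      (-(2 * t) * ((3:ℝ)/2) * (1 - t ^ 2) ^ ((3:ℝ)/2 - 1)) t :=
    hinner.rpow_const (Or.inl (ne_of_gt hu))
  have hdenne : (1 - t ^ 2) ^ ((3:ℝ)/2) ≠ 0 := ne_of_gt (Real.rpow_pos_of_pos hu _)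
  have := hnum.div hden hdenne
  refine this.congr_deriv ?_
  -- algebraic identity with rpow
  set u := 1 - t ^ 2 with hu'
  have ha : u ^ ((1:ℝ)/2) * u ^ ((1:ℝ)/2) = u := by
    rw [← Real.rpow_add hu]; norm_num
  have e32 : u ^ ((3:ℝ)/2) = u * u ^ ((1:ℝ)/2) := by
    rw [show (3:ℝ)/2 = 1 + 1/2 by norm_num, Real.rpow_add hu, Real.rpow_one]
  have e12 : u ^ ((3:ℝ)/2 - 1) = u ^ ((1:ℝ)/2) := by norm_num
  have e52 : u ^ ((5:ℝ)/2) = u ^ 2 * u ^ ((1:ℝ)/2) := by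
    rw [show (5:ℝ)/2 = ((2:ℕ):ℝ) + 1/2 by norm_num, Real.rpow_add hu, Real.rpow_natCast]
  have hane : u ^ ((1:ℝ)/2) ≠ 0 := ne_of_gt (Real.rpow_pos_of_pos hu _)
  have hune : u ≠ 0 := ne_of_gt hu
  rw [e12, e52, e32]
  field_simp
  ring_nf
  rw [hu']; ring


lemma t0_sq : ((Real.sqrt 2)⁻¹) ^ 2 = 1/2 := by
  rw [inv_pow, Real.sq_sqrt (by norm_num : (2:ℝ) ≥ 0)]; norm_num

lemma one_sub_t0_sq : 1 - ((Real.sqrt 2)⁻¹) ^ 2 = 1/2 := by rw [t0_sq]; norm_num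

lemma half_rpow_half : ((1:ℝ)/2) ^ ((1:ℝ)/2) = (Real.sqrt 2)⁻¹ := by
  rw [← Real.sqrt_eq_rpow, show (1:ℝ)/2 = (2:ℝ)⁻¹ by norm_num, Real.sqrt_inv]

lemma gOne_val : gOne (Real.sqrt 2)⁻¹ = -4 * Real.sqrt 2 := by
  have h2 : Real.sqrt 2 * Real.sqrt 2 = 2 := Real.mul_self_sqrt (by norm_num)
  have hs : (0:ℝ) < Real.sqrt 2 := Real.sqrt_pos.mpr (by norm_num)
  rw [gOne, t0_sq, show ((Real.sqrt 2)⁻¹) ^ 4 = (((Real.sqrt 2)⁻¹) ^ 2)^2 by ring, t0_sq]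
  rw [show (1:ℝ) - 1/2 = 1/2 by norm_num,
    show (3:ℝ)/2 = 1 + 1/2 by norm_num, Real.rpow_add (by norm_num), Real.rpow_one,
    half_rpow_half]
  field_simp
  nlinarith [h2]

lemma gTwo_val : gTwo (Real.sqrt 2)⁻¹ = -4 * Real.sqrt 2 := by
  have h2 : Real.sqrt 2 * Real.sqrt 2 = 2 := Real.mul_self_sqrt (by norm_num)
  have hs : (0:ℝ) < Real.sqrt 2 := Real.sqrt_pos.mpr (by norm_num)
  have ht := t0_sq
  set t := (Real.sqrt 2)⁻¹ with htdef
  have e4 : t ^ 4 = 1/4 := by rw [show t^4 = (t^2)^2 by ring, ht]; norm_num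
  have e6 : t ^ 6 = 1/8 := by rw [show t^6 = (t^2)^3 by ring, ht]; norm_num
  have e8 : t ^ 8 = 1/16 := by rw [show t^8 = (t^2)^4 by ring, ht]; norm_num
  have e5 : t ^ 5 = t/4 := by rw [show t^5 = t*(t^2)^2 by ring, ht]; ring
  rw [gTwo, e5, ht, e4, e6, e8]
  have htinv : t = Real.sqrt 2 / 2 := by
    rw [htdef, inv_eq_one_div]; field_simp; rw [Real.sq_sqrt (by norm_num : (0:ℝ) ≤ 2)]
  rw [htinv]
  ring_nf

lemma gOne_deriv_t0 : deriv gOne (Real.sqrt 2)⁻¹ = -56 := by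
  have hs : (0:ℝ) < Real.sqrt 2 := Real.sqrt_pos.mpr (by norm_num)
  have hlt : ((Real.sqrt 2)⁻¹) ^ 2 < 1 := by rw [t0_sq]; norm_num
  have hd := (hasDerivAt_gOne hlt).deriv
  rw [hd]
  set t := (Real.sqrt 2)⁻¹ with htdef
  have ht : t ^ 2 = 1/2 := t0_sq
  have e4 : t ^ 4 = 1/4 := by rw [show t^4 = (t^2)^2 by ring, ht]; norm_num
  rw [ht, e4, show (1:ℝ) - 1/2 = 1/2 by norm_num,
    show (5:ℝ)/2 = ((2:ℕ):ℝ) + 1/2 by norm_num, Real.rpow_add (by norm_num),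
    Real.rpow_natCast, half_rpow_half]
  have htne : t ≠ 0 := by positivity
  have h1 : t * Real.sqrt 2 = 1 := inv_mul_cancel₀ hs.ne'
  field_simp
  linear_combination (-224:ℝ) * h1

lemma hasDerivAt_gTwo {t : ℝ} (h : 3 - 16 * t ^ 2 + 28 * t ^ 4 ≠ 0) :
    HasDerivAt gTwo
      (((1280 * t ^ 4 * (27 - 192 * t ^ 2 + 510 * t ^ 4 - 672 * t ^ 6 + 392 * t ^ 8)
          + 256 * t ^ 5 * (-384 * t + 2040 * t ^ 3 - 4032 * t ^ 5 + 3136 * t ^ 7))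
            * (3 - 16 * t ^ 2 + 28 * t ^ 4) ^ 3
        - 256 * t ^ 5 * (27 - 192 * t ^ 2 + 510 * t ^ 4 - 672 * t ^ 6 + 392 * t ^ 8)
            * (3 * (3 - 16 * t ^ 2 + 28 * t ^ 4) ^ 2 * (-32 * t + 112 * t ^ 3)))
        / ((3 - 16 * t ^ 2 + 28 * t ^ 4) ^ 3) ^ 2) t := by
  have hnum : HasDerivAt
      (fun t : ℝ => 256 * t ^ 5 * (27 - 192 * t ^ 2 + 510 * t ^ 4 - 672 * t ^ 6 + 392 * t ^ 8))
      (1280 * t ^ 4 * (27 - 192 * t ^ 2 + 510 * t ^ 4 - 672 * t ^ 6 + 392 * t ^ 8)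
        + 256 * t ^ 5 * (-384 * t + 2040 * t ^ 3 - 4032 * t ^ 5 + 3136 * t ^ 7)) t := by
    have h5 := (hasDerivAt_pow 5 t).const_mul (256:ℝ)
    have hR : HasDerivAt
        (fun t : ℝ => 27 - 192 * t ^ 2 + 510 * t ^ 4 - 672 * t ^ 6 + 392 * t ^ 8)
        (-384 * t + 2040 * t ^ 3 - 4032 * t ^ 5 + 3136 * t ^ 7) t := by
      have h2 := hasDerivAt_pow 2 t
      have h4 := hasDerivAt_pow 4 t
      have h6 := hasDerivAt_pow 6 t
      have h8 := hasDerivAt_pow 8 t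
      exact (((((h2.const_mul 192).const_sub 27).add (h4.const_mul 510)).sub
        (h6.const_mul 672)).add (h8.const_mul 392)).congr_deriv (by push_cast; ring)
    exact (h5.mul hR).congr_deriv (by push_cast; ring)
  have hq : HasDerivAt (fun t : ℝ => 3 - 16 * t ^ 2 + 28 * t ^ 4)
      (-32 * t + 112 * t ^ 3) t := by
    have h2 := hasDerivAt_pow 2 t
    have h4 := hasDerivAt_pow 4 t
    exact (((h2.const_mul 16).const_sub 3).add (h4.const_mul 28)).congr_deriv (by push_cast; ring)
  have hq3 : HasDerivAt (fun t : ℝ => (3 - 16 * t ^ 2 + 28 * t ^ 4) ^ 3)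
      (3 * (3 - 16 * t ^ 2 + 28 * t ^ 4) ^ 2 * (-32 * t + 112 * t ^ 3)) t := by
    exact (hq.pow 3).congr_deriv (by push_cast; ring)
  exact hnum.div hq3 (pow_ne_zero 3 h)

lemma gTwo_deriv_t0 : deriv gTwo (Real.sqrt 2)⁻¹ = 184 := by
  have ht : ((Real.sqrt 2)⁻¹) ^ 2 = 1/2 := t0_sq
  set t := (Real.sqrt 2)⁻¹ with htdef
  have hqv : 3 - 16 * t ^ 2 + 28 * t ^ 4 = 2 := by
    rw [show t^4 = (t^2)^2 by ring, ht]; norm_num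
  have hd := (hasDerivAt_gTwo (by rw [hqv]; norm_num)).deriv
  rw [hd, hqv]
  have e4 : t ^ 4 = 1/4 := by rw [show t^4 = (t^2)^2 by ring, ht]; norm_num
  have e6 : t ^ 6 = 1/8 := by rw [show t^6 = (t^2)^3 by ring, ht]; norm_num
  have e8 : t ^ 8 = 1/16 := by rw [show t^8 = (t^2)^4 by ring, ht]; norm_num
  have e3 : t ^ 3 = t/2 := by rw [show t^3 = t*t^2 by ring, ht]; ring
  have e5 : t ^ 5 = t/4 := by rw [show t^5 = t*(t^2)^2 by ring, ht]; ring
  have e7 : t ^ 7 = t/8 := by rw [show t^7 = t*(t^2)^3 by ring, ht]; ring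
  rw [e3, e4, e5, e6, e7, e8]
  ring_nf
  nlinarith [ht, e4]

/-- `g₁(1/√2) = g₂(1/√2) = −4√2`;
`g₁'(t) = −2t(15 − 20t² + 8t⁴)/(1−t²)^{5/2}` on `[0,1)`, `g₁'(1/√2) = −56`,
`g₂'(1/√2) = 184`, and hence the jump `g₂'(1/√2) − g₁'(1/√2) = 240`. -/
theorem cylinder_radon_jump :
    gOne (Real.sqrt 2)⁻¹ = -4 * Real.sqrt 2 ∧
    gTwo (Real.sqrt 2)⁻¹ = -4 * Real.sqrt 2 ∧
    (∀ t ∈ Ico (0 : ℝ) 1,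
      deriv gOne t = -(2 * t * (15 - 20 * t ^ 2 + 8 * t ^ 4)) / (1 - t ^ 2) ^ ((5 : ℝ) / 2)) ∧
    deriv gOne (Real.sqrt 2)⁻¹ = -56 ∧
    deriv gTwo (Real.sqrt 2)⁻¹ = 184 ∧
    deriv gTwo (Real.sqrt 2)⁻¹ - deriv gOne (Real.sqrt 2)⁻¹ = 240 := by
  refine ⟨gOne_val, gTwo_val, ?_, gOne_deriv_t0, gTwo_deriv_t0, by
    rw [gOne_deriv_t0, gTwo_deriv_t0]; norm_num⟩
  intro t hti
  obtain ⟨h0, h1⟩ := hti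
  exact (hasDerivAt_gOne (by nlinarith)).deriv
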